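/- The three points P₁ = (−2·cos(π/9)·sin(2π/9), 2·cos(π/9)·cos(2π/9)), P₁' = (2·cos(π/9)·sin(π/9), −2·cos(π/9)·cos(π/9)) and T₁ = (−2√3·s, 2s) are collinear, where P₁' = R(P₁). -/

import Mathlib

open Real

noncomputable section

abbrev Pt := EuclideanSpace ℝ (Fin 2)

def pt (x y : ℝ) : Pt := (WithLp.equiv 2 _).symm ![x, y]

/-- Counterclockwise rotation by angle `θ` about the point `c`. -/
def rotAbout (θ : ℝ) (c p : Pt) : Pt :=
  pt (c 0 + Real.cos θ * (p 0 - c 0) - Real.sin θ * (p 1 - c 1))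
     (c 1 + Real.sin θ * (p 0 - c 0) + Real.cos θ * (p 1 - c 1))

/-- The origin. -/
def O : Pt := pt 0 0

/-- The constant s = sin(π/18)·cos(π/9). -/
def s : ℝ := Real.sin (π / 18) * Real.cos (π / 9)

/-- The point P₁. -/
def P₁ : Pt :=
  pt (-(2 * Real.cos (π / 9) * Real.sin (2 * π / 9)))
     (2 * Real.cos (π / 9) * Real.cos (2 * π / 9))

/-- The point P₁' = R(P₁). -/
def P₁' : Pt :=
  pt (2 * Real.cos (π / 9) * Real.sin (π / 9))
     (-(2 * Real.cos (π / 9) * Real.cos (π / 9)))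

/-- The tangency point T₁ = (−2√3·s, 2s). -/
def T₁ : Pt := pt (-(2 * Real.sqrt 3 * s)) (2 * s)


/- P₁ lies on the circle of radius 2cos(π/9) at angle 2π/9 from the positive y-axis, and
2π/9 + 8π/9 = π + π/9 gives P₁' = R(P₁). For collinearity, T₁ is the point of parameter
2sin(π/18) on the line P₁P₁'. Writing π/9 = π/6 - π/18 and 2π/9 = π/6 + π/18, the coordinate
identities reduce to the double-angle formula sin(π/9) = 2sin(π/18)cos(π/18); this is where
π/6 = 3·(π/18) is used. -/

lemma pt_apply_zero (x y : ℝ) : pt x y 0 = x := rfl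

lemma pt_apply_one (x y : ℝ) : pt x y 1 = y := rfl

lemma lineMap_pt (a b c d t : ℝ) :
    AffineMap.lineMap (pt a b) (pt c d) t = pt (a + t * (c - a)) (b + t * (d - b)) := by
  ext i
  fin_cases i <;> simp [AffineMap.lineMap_apply_module', pt] <;> ring

lemma rotAbout_O_polar (θ r α : ℝ) :
    rotAbout θ O (pt (-(r * sin α)) (r * cos α)) = pt (-(r * sin (α + θ))) (r * cos (α + θ)) := by
  simp only [rotAbout, O, pt_apply_zero, pt_apply_one, sin_add, cos_add]
  congr 1 <;> ring

lemma collinear_of_eq_lineMap {k V P : Type*} [Field k] [AddCommGroup V] [Module k V]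
    [AddTorsor V P] {p q r : P} {t : k} (h : r = AffineMap.lineMap p q t) :
    Collinear k {p, q, r} := by
  rw [Set.pair_comm, Set.insert_comm]
  exact collinear_insert_of_mem_affineSpan_pair (h ▸ AffineMap.lineMap_mem_affineSpan_pair t p q)

lemma sin_two_pi_div_nine : sin (2 * π / 9) = (cos (π / 18) + √3 * sin (π / 18)) / 2 := by
  rw [show 2 * π / 9 = π / 6 + π / 18 by ring, sin_add, sin_pi_div_six, cos_pi_div_six]; ring

lemma cos_two_pi_div_nine : cos (2 * π / 9) = (√3 * cos (π / 18) - sin (π / 18)) / 2 := by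
  rw [show 2 * π / 9 = π / 6 + π / 18 by ring, cos_add, sin_pi_div_six, cos_pi_div_six]; ring

lemma sin_pi_div_nine : sin (π / 9) = (cos (π / 18) - √3 * sin (π / 18)) / 2 := by
  rw [show π / 9 = π / 6 - π / 18 by ring, sin_sub, sin_pi_div_six, cos_pi_div_six]; ring

lemma cos_pi_div_nine : cos (π / 9) = (√3 * cos (π / 18) + sin (π / 18)) / 2 := by
  rw [show π / 9 = π / 6 - π / 18 by ring, cos_sub, sin_pi_div_six, cos_pi_div_six]; ring

lemma sin_pi_div_nine_eq_two_mul : sin (π / 9) = 2 * sin (π / 18) * cos (π / 18) := by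
  rw [← sin_two_mul]; ring_nf

lemma neg_sqrt_three_mul_sin_pi_div_eighteen :
    -(√3 * sin (π / 18)) = -sin (2 * π / 9) + 2 * sin (π / 18) * (sin (π / 9) + sin (2 * π / 9)) := by
  linear_combination (1 - 2 * sin (π / 18)) * sin_two_pi_div_nine
    - (2 * sin (π / 18) + 1) * sin_pi_div_nine + sin_pi_div_nine_eq_two_mul

lemma sin_pi_div_eighteen_eq :
    sin (π / 18) = cos (2 * π / 9) + 2 * sin (π / 18) * (-cos (π / 9) - cos (2 * π / 9)) := by
  linear_combination (2 * sin (π / 18) - 1) * cos_two_pi_div_nine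
    + 2 * sin (π / 18) * cos_pi_div_nine + √3 * sin_pi_div_nine
    - √3 * sin_pi_div_nine_eq_two_mul - sin (π / 18) / 2 * Real.sq_sqrt (zero_le_three (α := ℝ))

lemma T₁_eq_lineMap : T₁ = AffineMap.lineMap P₁ P₁' (2 * sin (π / 18)) := by
  rw [T₁, P₁, P₁', lineMap_pt, s]
  congr 1
  · linear_combination 2 * cos (π / 9) * neg_sqrt_three_mul_sin_pi_div_eighteen
  · linear_combination 2 * cos (π / 9) * sin_pi_div_eighteen_eq

theorem P1_P1'_T1_collinear :
    Collinear ℝ ({P₁, P₁', T₁} : Set Pt) ∧ rotAbout (8 * π / 9) O P₁ = P₁' := by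
  refine ⟨collinear_of_eq_lineMap T₁_eq_lineMap, ?_⟩
  rw [P₁, rotAbout_O_polar, show 2 * π / 9 + 8 * π / 9 = π / 9 + π by ring, sin_add_pi,
    cos_add_pi, mul_neg, mul_neg, neg_neg, P₁']
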